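/- Case k = 1 of the main conjecture: for any X ∈ P^m and e ≥ 1, writing (X_1, X_2) = Ψ_{(e,(m,m+e))} ∘ Ψ_{(e,(m,m))} (X, X), one has X_1 ⊆ X_2. Explicitly, Ψ_{(e,(m,m))}(X,X) = (X, (X+e) ∪ {0,...,e-1}), and applying Ψ_{(e,(m,m+e))} to this pair yields a pair (Y_1, Y_2) with Y_1 ⊆ Y_2. -/

import Mathlib

/-- pick the largest element of `Y` that is `≤ a`, or the largest element of `Y` if none. -/
def pickLE (a : ℕ) (Y : Finset ℕ) : ℕ :=
  if h : (Y.filter (fun b => b ≤ a)).Nonempty then (Y.filter (fun b => b ≤ a)).max' h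
  else if h2 : Y.Nonempty then Y.max' h2 else 0

/-- greedy matching: process the given list in order, each time picking via `pickLE`
from the remaining elements of `Y`. -/
def greedyList : List ℕ → Finset ℕ → List ℕ
  | [], _ => []
  | a :: as, Y => pickLE a Y :: greedyList as (Y.erase (pickLE a Y))

/-- the list of images of the greedy injection `φ : X1 → X2`, processing the elements
of `X1` in increasing order. -/
def phiList (X1 X2 : Finset ℕ) : List ℕ := greedyList (X1.sort (· ≤ ·)) X2

/-- the image `Y1 = φ(X1)` of the greedy injection. -/
def phiImage (X1 X2 : Finset ℕ) : Finset ℕ := (phiList X1 X2).toFinset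

/-- the map `Ψ_{(e,(m1,m2))}` on pairs of finite sets of nonnegative integers:
`Ψ(X1,X2) = (φ(X1), (X1+e) ∪ {b+e : b ∈ X2 \ φ(X1)} ∪ {0,…,e-1})`. -/
def Psi (e : ℕ) (X1 X2 : Finset ℕ) : Finset ℕ × Finset ℕ :=
  (phiImage X1 X2,
   (X1.image (fun x => x + e)) ∪ ((X2 \ phiImage X1 X2).image (fun x => x + e)) ∪
     Finset.range e)

/-!
After the first step the pair is `(X, (X+e) ∪ {0,…,e-1})`, since the greedy injection of a
subset is the identity. In the second step `φ(X)` lies in `X₂ = (X+e) ∪ {0,…,e-1}` because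
`|X| ≤ |X₂|`, so the greedy matching never runs out of elements, and the new second component
contains both `X+e` and `{0,…,e-1}`.
-/

open Finset

lemma pickLE_mem (a : ℕ) {Y : Finset ℕ} (hY : Y.Nonempty) : pickLE a Y ∈ Y := by
  unfold pickLE
  split_ifs with h
  · exact mem_of_mem_filter _ (max'_mem _ h)
  · exact max'_mem Y hY

lemma pickLE_eq_self {a : ℕ} {Y : Finset ℕ} (ha : a ∈ Y) : pickLE a Y = a := by
  have hmem : a ∈ Y.filter (· ≤ a) := mem_filter.2 ⟨ha, le_rfl⟩
  rw [pickLE, dif_pos ⟨a, hmem⟩]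
  exact le_antisymm (mem_filter.1 (max'_mem (Y.filter (· ≤ a)) _)).2 (le_max' _ _ hmem)

lemma mem_of_mem_greedyList {l : List ℕ} {Y : Finset ℕ} (hl : l.length ≤ Y.card) {y : ℕ}
    (hy : y ∈ greedyList l Y) : y ∈ Y := by
  induction l generalizing Y with
  | nil => simp [greedyList] at hy
  | cons a as ih =>
    have hY : Y.Nonempty := card_pos.1 (lt_of_lt_of_le (Nat.succ_pos _) hl)
    rcases List.mem_cons.1 hy with rfl | hy
    · exact pickLE_mem a hY
    · refine mem_of_mem_erase (ih ?_ hy)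
      rw [card_erase_of_mem (pickLE_mem a hY)]
      simp only [List.length_cons] at hl
      omega

lemma greedyList_eq_self {l : List ℕ} (hl : l.Nodup) {Y : Finset ℕ} (hlY : ∀ a ∈ l, a ∈ Y) :
    greedyList l Y = l := by
  induction l generalizing Y with
  | nil => rfl
  | cons a as ih =>
    obtain ⟨ha, has⟩ := List.nodup_cons.1 hl
    rw [greedyList, pickLE_eq_self (hlY a List.mem_cons_self), ih has]
    exact fun b hb => mem_erase.2 ⟨ne_of_mem_of_not_mem hb ha, hlY b (List.mem_cons_of_mem _ hb)⟩

lemma phiImage_subset {X1 X2 : Finset ℕ} (h : X1.card ≤ X2.card) : phiImage X1 X2 ⊆ X2 :=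
  fun _ hy => mem_of_mem_greedyList (by rwa [length_sort]) (List.mem_toFinset.1 hy)

lemma phiImage_eq_self {X1 X2 : Finset ℕ} (h : X1 ⊆ X2) : phiImage X1 X2 = X1 := by
  rw [phiImage, phiList,
    greedyList_eq_self (sort_nodup _ _) (fun a ha => h ((mem_sort _).1 ha)), sort_toFinset]

lemma Psi_eq_of_subset (e : ℕ) {X1 X2 : Finset ℕ} (h : X1 ⊆ X2) :
    Psi e X1 X2 = (X1, X2.image (· + e) ∪ range e) := by
  rw [Psi, phiImage_eq_self h, ← image_union, union_sdiff_of_subset h]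

lemma image_add_union_range_subset_Psi_snd (e : ℕ) (X1 X2 : Finset ℕ) :
    X1.image (· + e) ∪ range e ⊆ (Psi e X1 X2).2 :=
  union_subset_union subset_union_left le_rfl

theorem stmt_11_general (e : ℕ) (X : Finset ℕ) :
    Psi e X X = (X, X.image (fun x => x + e) ∪ Finset.range e) ∧
    (Psi e (Psi e X X).1 (Psi e X X).2).1 ⊆ (Psi e (Psi e X X).1 (Psi e X X).2).2 := by
  have hfirst := Psi_eq_of_subset e (subset_refl X)
  refine ⟨hfirst, ?_⟩
  rw [hfirst]
  have hcard : X.card ≤ (X.image (· + e) ∪ range e).card := by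
    rw [← card_image_of_injective X (add_left_injective e)]
    exact card_le_card subset_union_left
  exact (phiImage_subset hcard).trans (image_add_union_range_subset_Psi_snd e _ _)

/-- the case `k = 1` of the main conjecture: starting from `(X,X)`,
the first application of `Ψ` gives `(X, (X+e) ∪ {0,…,e-1})`, and after the second
application the first component is contained in the second. -/
theorem stmt_11 (e m : ℕ) (he : 1 ≤ e) (X : Finset ℕ) (hX : X.card = m) :
    Psi e X X = (X, X.image (fun x => x + e) ∪ Finset.range e) ∧
    (Psi e (Psi e X X).1 (Psi e X X).2).1 ⊆ (Psi e (Psi e X X).1 (Psi e X X).2).2 :=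
  stmt_11_general e X
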